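/- arXiv:1010.1597 — 5 statements merged into one kernel-verified Lean document; each statement's English description precedes it below -/
import Mathlib

section
/- Let A, B ⊆ F_q^2 be nonempty and suppose there exist a constant K ≥ 1 and a set W ⊆ F_q^2 with |W| ≤ K such that |B ∩ (B + c)| ≤ K for all c ∈ F_q^2 \ W. Then |A - B| ≥ (1/(2K)) · min(|A||B|, |B|²). -/
/-!
By Cauchy–Schwarz, `|A|²|B|² ≤ |A - B| · E(A, -B)`. The energy `E(A, -B)` counts, for each pair
`(a, a') ∈ A²`, the pairs `(b, b') ∈ B²` with `b - b' = a - a'`, that is `|B ∩ (B + (a - a'))|`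
of them. This is at most `K` when `a - a' ∉ W`, and at most `|B|` on the at most `|W||A|` pairs
with `a - a' ∈ W`, so `E(A, -B) ≤ K(|A|² + |A||B|)`. It remains to note that
`min(|A||B|, |B|²) · (|A|² + |A||B|) ≤ 2|A|²|B|²`.
-/
open Finset
open scoped Pointwise Combinatorics.Additive

namespace Finset
variable {G : Type*} [AddCommGroup G] [DecidableEq G]

lemma card_filter_sub_eq_card_inter_image_add (B : Finset G) (c : G) :
    #{q ∈ B ×ˢ B | q.1 - q.2 = c} = #(B ∩ B.image (· + c)) := by
  refine card_bij' (fun q _ => q.1) (fun b _ => (b, b - c)) ?_ ?_ ?_ fun _ _ => rfl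
  · intro q hq
    simp only [mem_filter, mem_product] at hq
    simp only [mem_inter, mem_image]
    exact ⟨hq.1.1, q.2, hq.1.2, by grind⟩
  · intro b hb
    simp only [mem_inter, mem_image] at hb
    obtain ⟨hb, y, hy, rfl⟩ := hb
    simpa using ⟨hb, hy⟩
  · intro q hq
    simp only [mem_filter] at hq
    ext <;> simp [← hq.2]

lemma addEnergy_neg_right_eq_sum (A B : Finset G) :
    E[A, -B] = ∑ p ∈ A ×ˢ A, #(B ∩ B.image (· + (p.1 - p.2))) := by
  rw [addEnergy, card_filter, sum_product]
  refine sum_congr rfl fun p _ => ?_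
  rw [← card_filter, ← card_filter_sub_eq_card_inter_image_add]
  refine card_bij' (fun q _ => -q) (fun q _ => -q) ?_ ?_ (fun _ _ => neg_neg _)
    (fun _ _ => neg_neg _)
  all_goals
    intro q hq
    simp only [mem_filter, mem_product, mem_neg', Prod.fst_neg, Prod.snd_neg, neg_neg] at hq ⊢
    exact ⟨hq.1, by grind⟩

lemma card_filter_sub_mem_le (A W : Finset G) : #{p ∈ A ×ˢ A | p.1 - p.2 ∈ W} ≤ #W * #A := by
  rw [← card_product]
  refine card_le_card_of_injOn (fun p => (p.1 - p.2, p.2)) (fun p hp => ?_) fun p _ q _ h => ?_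
  · simp only [coe_filter, mem_product] at hp
    simp [hp.2, hp.1.2]
  · simp only [Prod.mk.injEq] at h
    ext
    · simpa [h.2] using h.1
    · exact h.2

lemma addEnergy_neg_right_le (A B W : Finset G) {K : ℝ} (hK : 0 ≤ K)
    (hBc : ∀ c ∉ W, (#(B ∩ B.image (· + c)) : ℝ) ≤ K) :
    (E[A, -B] : ℝ) ≤ K * #A ^ 2 + #W * #A * #B := by
  rw [addEnergy_neg_right_eq_sum, Nat.cast_sum,
    ← sum_filter_add_sum_filter_not _ (fun p : G × G => p.1 - p.2 ∈ W), add_comm]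
  gcongr
  · calc _ ≤ ∑ p ∈ A ×ˢ A with p.1 - p.2 ∉ W, K :=
          sum_le_sum fun _ hp => hBc _ (mem_filter.1 hp).2
      _ ≤ ∑ p ∈ A ×ˢ A, K := sum_le_sum_of_subset_of_nonneg (filter_subset _ _) fun _ _ _ => hK
      _ = K * #A ^ 2 := by rw [sum_const, card_product, nsmul_eq_mul]; push_cast; ring
  · calc _ ≤ ∑ p ∈ A ×ˢ A with p.1 - p.2 ∈ W, (#B : ℝ) :=
          sum_le_sum fun _ _ => by exact_mod_cast card_le_card inter_subset_left
      _ ≤ #W * #A * #B := by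
          rw [sum_const, nsmul_eq_mul]
          gcongr
          exact_mod_cast card_filter_sub_mem_le A W

end Finset

lemma min_mul_le_of_sq_mul_sq_le {a b K D : ℝ} (ha : 0 ≤ a) (hb : 0 ≤ b) (hK : 0 ≤ K)
    (hD : 0 ≤ D) (h : (a * b) ^ 2 ≤ D * (K * (a ^ 2 + a * b))) :
    min (a * b) (b ^ 2) ≤ 2 * K * D := by
  rcases ha.eq_or_lt with rfl | ha
  · simp only [zero_mul, min_le_iff]
    left; positivity
  have hmin : min (a * b) (b ^ 2) * (a ^ 2 + a * b) ≤ 2 * (a * b) ^ 2 := by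
    rcases le_total a b with hab | hba
    · rw [min_eq_left (by nlinarith)]; nlinarith
    · rw [min_eq_right (by nlinarith)]; nlinarith
  exact le_of_mul_le_mul_right (by nlinarith) (by positivity : 0 < a ^ 2 + a * b)

theorem stmt_8_general {F : Type*} [Field F] [DecidableEq F]
    (A B : Finset (F × F))
    (K : ℝ) (hK : 1 ≤ K) (W : Finset (F × F)) (hW : (W.card : ℝ) ≤ K)
    (hBc : ∀ c : F × F, c ∉ W → ((B ∩ B.image (fun y => y + c)).card : ℝ) ≤ K) :
    (1 / (2 * K)) * min ((A.card : ℝ) * B.card) ((B.card : ℝ) ^ 2) ≤ (A - B).card := by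
  have hCS : ((#A : ℝ) * #B) ^ 2 ≤ #(A - B) * E[A, -B] := by
    rw [sub_eq_add_neg, mul_pow]
    exact_mod_cast card_neg B ▸ le_card_add_mul_addEnergy A (-B)
  have hE : (E[A, -B] : ℝ) ≤ K * (#A ^ 2 + #A * #B) := by
    calc (E[A, -B] : ℝ) ≤ K * #A ^ 2 + #W * #A * #B :=
          addEnergy_neg_right_le A B W (by linarith) hBc
      _ ≤ K * #A ^ 2 + K * #A * #B := by gcongr
      _ = K * (#A ^ 2 + #A * #B) := by ring
  rw [one_div, inv_mul_le_iff₀ (by positivity)]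
  exact min_mul_le_of_sq_mul_sq_le (by positivity) (by positivity) (by linarith) (by positivity)
    (hCS.trans (by gcongr))

theorem stmt_8 {F : Type*} [Field F] [Fintype F] [DecidableEq F]
    (A B : Finset (F × F)) (hA : A.Nonempty) (hB : B.Nonempty)
    (K : ℝ) (hK : 1 ≤ K) (W : Finset (F × F)) (hW : (W.card : ℝ) ≤ K)
    (hBc : ∀ c : F × F, c ∉ W → ((B ∩ B.image (fun y => y + c)).card : ℝ) ≤ K) :
    (1 / (2 * K)) * min ((A.card : ℝ) * B.card) ((B.card : ℝ) ^ 2) ≤ (A - B).card :=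
  stmt_8_general A B K hK W hW hBc
end

section
/- Let V ⊆ F_q^2 be a set such that |V ∩ (V + c)| ≤ K for every nonzero c ∈ F_q^2, where K ≥ 1. Then for any B ⊆ V and any nonempty A ⊆ F_q^2, |A - B| ≥ (1/(2K)) · min(|A||B|, |B|²). -/
open Finset
open scoped Pointwise Combinatorics.Additive

/-!
Let `r(d)` count the representations `d = a - b` with `a ∈ A`, `b ∈ B`. By Cauchy–Schwarz,
`(|A| |B|)² = (∑ r(d))² ≤ |A - B| · E(A, -B)`, where the energy `E(A, -B) = ∑ r(d)²` counts the
solutions of `a₁ - b₁ = a₂ - b₂`. Grouping them by `c = a₁ - a₂`, each pair `(a₁, a₂)` contributes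
`|B ∩ (B + c)|`: that is `|B|` on the diagonal and at most `K` off it, so
`E(A, -B) ≤ |A| |B| + K |A|²`. Comparing `|A|` with `|B|` finishes the proof.
-/

section Energy

variable {α : Type*} [DecidableEq α] [AddCommGroup α]

lemma addEnergy_neg_eq_sum_card_inter_vadd (s t : Finset α) :
    E[s, -t] = ∑ x ∈ s ×ˢ s, #(t ∩ ((x.1 - x.2) +ᵥ t)) := by
  rw [addEnergy, card_eq_sum_card_fiberwise (f := Prod.fst) (t := s ×ˢ s)
    (fun z hz => (mem_product.1 (mem_filter.1 hz).1).1)]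
  refine sum_congr rfl fun x hx => ?_
  refine card_nbij' (fun z => -z.2.1) (fun b => (x, -b, x.1 - x.2 - b)) ?_ ?_ ?_ ?_
  · rintro ⟨a, b₁, b₂⟩ hz
    simp only [mem_coe, mem_filter, mem_product, mem_neg'] at hz
    obtain ⟨⟨⟨-, hb₁, hb₂⟩, h⟩, rfl⟩ := hz
    simp only [mem_coe, mem_inter, mem_vadd_finset, vadd_eq_add]
    exact ⟨hb₁, -b₂, hb₂, by grind⟩
  · rintro b hb
    simp only [mem_coe, mem_inter, mem_vadd_finset, vadd_eq_add] at hb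
    obtain ⟨hb, b', hb', rfl⟩ := hb
    simp only [mem_coe, mem_filter, mem_product, mem_neg']
    exact ⟨⟨⟨mem_product.1 hx, by simpa using hb, by simpa using hb'⟩, by abel⟩, trivial⟩
  · rintro ⟨a, b₁, b₂⟩ hz
    simp only [mem_coe, mem_filter] at hz
    obtain ⟨⟨-, h⟩, rfl⟩ := hz
    simp only [neg_neg, Prod.mk.injEq, true_and]
    grind
  · intro b _
    simp

lemma addEnergy_neg_le {s t : Finset α} {K : ℝ}
    (ht : ∀ c : α, c ≠ 0 → (#(t ∩ (c +ᵥ t)) : ℝ) ≤ K) :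
    (E[s, -t] : ℝ) ≤ #s * #t + K * (#s ^ 2 - #s) := by
  have hdiag : ∑ x ∈ s.diag, (#(t ∩ ((x.1 - x.2) +ᵥ t)) : ℝ) = #s * #t := by
    rw [sum_congr rfl fun x hx => by rw [(mem_diag.1 hx).2, sub_self, zero_vadd, inter_self],
      sum_const, diag_card, nsmul_eq_mul]
  have hoffDiag : ∑ x ∈ s.offDiag, (#(t ∩ ((x.1 - x.2) +ᵥ t)) : ℝ) ≤ K * (#s ^ 2 - #s) := by
    calc _ ≤ ∑ x ∈ s.offDiag, K :=
          sum_le_sum fun x hx => ht _ (sub_ne_zero.2 (mem_offDiag.1 hx).2.2)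
      _ = K * (#s ^ 2 - #s) := by
          rw [sum_const, offDiag_card, nsmul_eq_mul, Nat.cast_sub (Nat.le_mul_self _)]
          push_cast; ring
  rw [addEnergy_neg_eq_sum_card_inter_vadd, ← diag_union_offDiag, Nat.cast_sum,
    sum_union (disjoint_diag_offDiag s), hdiag]
  linarith

lemma sq_card_mul_card_le_card_sub_mul_addEnergy_neg (s t : Finset α) :
    (#s * #t) ^ 2 ≤ #(s - t) * E[s, -t] := by
  simpa [sub_eq_add_neg, mul_pow] using le_card_add_mul_addEnergy s (-t)

end Energy

lemma min_mul_sq_le_two_mul_of_sq_le {a b d K : ℝ} (ha : 0 ≤ a) (hb : 0 ≤ b) (hd : 0 ≤ d)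
    (hK : 1 ≤ K) (h : (a * b) ^ 2 ≤ d * (a * b + K * a ^ 2)) :
    min (a * b) (b ^ 2) ≤ 2 * K * d := by
  rcases le_total a b with hab | hba
  · refine (min_le_left _ _).trans ?_
    rcases (mul_nonneg ha hb).eq_or_lt with h0 | h0
    · rw [← h0]; positivity
    · have : a * b + K * a ^ 2 ≤ 2 * K * (a * b) := by
        nlinarith [mul_le_mul_of_nonneg_left hab ha]
      refine le_of_mul_le_mul_right ?_ h0
      nlinarith
  · refine (min_le_right _ _).trans ?_
    rcases (sq_nonneg a).eq_or_lt with h0 | h0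
    · nlinarith
    · have : a * b + K * a ^ 2 ≤ 2 * K * a ^ 2 := by
        nlinarith [mul_le_mul_of_nonneg_left hba ha]
      refine le_of_mul_le_mul_right ?_ h0
      nlinarith

theorem stmt_9_general {F : Type*} [Field F] [Fintype F] [DecidableEq F]
    (V : Finset (F × F)) (K : ℝ) (hK : 1 ≤ K)
    (hV : ∀ c : F × F, c ≠ 0 → ((V ∩ V.image (fun v => v + c)).card : ℝ) ≤ K)
    (A B : Finset (F × F)) (hBV : B ⊆ V) :
    (1 / (2 * K)) * min ((A.card : ℝ) * B.card) ((B.card : ℝ) ^ 2) ≤ (A - B).card := by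
  have hB : ∀ c : F × F, c ≠ 0 → (#(B ∩ (c +ᵥ B)) : ℝ) ≤ K := fun c hc =>
    calc (#(B ∩ (c +ᵥ B)) : ℝ) ≤ #(V ∩ (c +ᵥ V)) := by gcongr
      _ ≤ K := by simpa [← image_vadd, add_comm] using hV c hc
  rw [one_div, inv_mul_le_iff₀ (by positivity)]
  refine min_mul_sq_le_two_mul_of_sq_le (by positivity) (by positivity) (by positivity) hK ?_
  calc _ ≤ #(A - B) * (E[A, -B] : ℝ) := by
        exact_mod_cast sq_card_mul_card_le_card_sub_mul_addEnergy_neg A B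
    _ ≤ #(A - B) * (#A * #B + K * (#A ^ 2 - #A)) := by gcongr; exact addEnergy_neg_le hB
    _ ≤ #(A - B) * (#A * #B + K * #A ^ 2) := by
        gcongr
        exact sub_le_self _ (by positivity)

theorem stmt_9 {F : Type*} [Field F] [Fintype F] [DecidableEq F]
    (V : Finset (F × F)) (K : ℝ) (hK : 1 ≤ K)
    (hV : ∀ c : F × F, c ≠ 0 → ((V ∩ V.image (fun v => v + c)).card : ℝ) ≤ K)
    (A B : Finset (F × F)) (hA : A.Nonempty) (hBV : B ⊆ V) :
    (1 / (2 * K)) * min ((A.card : ℝ) * B.card) ((B.card : ℝ) ^ 2) ≤ (A - B).card :=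
  stmt_9_general V K hK hV A B hBV
end

section
/- Let q be odd, and let A, B ⊆ F_q^2 with |A| ≥ αq and |B| ≥ αq for some α > 0. Suppose there exist K ≥ 1 and W ⊆ F_q^2 with |W| ≤ K such that |B ∩ (B + c)| ≤ K for all c ∈ F_q^2 \ W. Then the distance set Δ(A,B) = {‖x - y‖ : x ∈ A, y ∈ B} satisfies |Δ(A,B)| ≥ (α²/(4K)) · q. -/
/-!
By Cauchy–Schwarz, `|A|²|B|² ≤ |A - B| · E(A, -B)`, and the additive energy
`E(A, -B) = ∑_{a, a' ∈ A} |B ∩ (B + (a - a'))|` is at most `K|A|² + |W||A||B|`, so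
`|A - B| ≥ α²q²/(2K)`. Since `y² = s` has at most two roots, every circle `x₁² + x₂² = r`
has at most `2q` points, so the norm map is at most `2q`-to-one on `A - B`, and
`|Δ(A, B)| ≥ |A - B| / (2q)`.
-/

open Finset
open scoped Pointwise Combinatorics.Additive

namespace Finset

section AddCommGroup

variable {G : Type*} [AddCommGroup G] [DecidableEq G]

lemma addEnergy_neg_eq_sum_addConvolution (s t : Finset G) :
    E[s, -t] = ∑ a ∈ s ×ˢ s, t.addConvolution (-t) (a.1 - a.2) := by
  rw [addEnergy, card_eq_sum_card_fiberwise (f := Prod.fst) (t := s ×ˢ s)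
    fun x hx => (mem_product.1 (mem_filter.1 hx).1).1]
  refine sum_congr rfl fun a ha => ?_
  refine card_nbij' (fun x => (-x.2.1, x.2.2)) (fun b => (a, (-b.1, b.2))) ?_ ?_ ?_ ?_
  · rintro ⟨a', b₁, b₂⟩ hx
    simp only [mem_coe, mem_filter, mem_product, mem_neg'] at hx ⊢
    obtain ⟨⟨⟨-, hb₁, hb₂⟩, hsum⟩, rfl⟩ := hx
    exact ⟨⟨hb₁, hb₂⟩, by linear_combination (norm := abel) -hsum⟩
  · rintro ⟨b₁, b₂⟩ hb
    simp only [mem_coe, mem_filter, mem_product, mem_neg', neg_neg] at hb ⊢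
    refine ⟨⟨⟨mem_product.1 ha, hb.1.1, hb.1.2⟩, ?_⟩, trivial⟩
    linear_combination (norm := abel) -hb.2
  · rintro ⟨a', b₁, b₂⟩ hx
    simp only [mem_coe, mem_filter] at hx
    simp [← hx.2]
  · intro b _
    simp

lemma card_filter_sub_mem_le_s10 (s W : Finset G) :
    #{a ∈ s ×ˢ s | a.1 - a.2 ∈ W} ≤ #W * #s := by
  rw [← card_product]
  refine card_le_card_of_injOn (fun a => (a.1 - a.2, a.1)) ?_ ?_
  · intro a ha
    simp only [mem_coe, mem_filter, mem_product] at ha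
    exact mem_product.2 ⟨ha.2, ha.1.1⟩
  · rintro ⟨a₁, a₂⟩ - ⟨b₁, b₂⟩ - h
    simp only [Prod.mk.injEq] at h
    obtain ⟨hsub, rfl⟩ := h
    simpa using hsub

lemma addEnergy_neg_le (s t W : Finset G) {K : ℝ} (hK : 0 ≤ K)
    (ht : ∀ c ∉ W, (t.addConvolution (-t) c : ℝ) ≤ K) :
    (E[s, -t] : ℝ) ≤ K * #s ^ 2 + #W * #s * #t := by
  rw [addEnergy_neg_eq_sum_addConvolution, Nat.cast_sum,
    ← sum_filter_not_add_sum_filter _ (fun a => a.1 - a.2 ∈ W)]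
  gcongr ?_ + ?_
  · calc ∑ a ∈ s ×ˢ s with a.1 - a.2 ∉ W, (t.addConvolution (-t) (a.1 - a.2) : ℝ)
        ≤ ∑ a ∈ s ×ˢ s with a.1 - a.2 ∉ W, K :=
          sum_le_sum fun a ha => ht _ (mem_filter.1 ha).2
      _ ≤ ∑ _a ∈ s ×ˢ s, K :=
          sum_le_sum_of_subset_of_nonneg (filter_subset _ _) fun _ _ _ => hK
      _ = K * #s ^ 2 := by rw [sum_const, card_product, nsmul_eq_mul]; push_cast; ring
  · calc ∑ a ∈ s ×ˢ s with a.1 - a.2 ∈ W, (t.addConvolution (-t) (a.1 - a.2) : ℝ)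
        ≤ ∑ a ∈ s ×ˢ s with a.1 - a.2 ∈ W, (#t : ℝ) :=
          sum_le_sum fun _ _ => mod_cast addConvolution_le_card_left
      _ = #{a ∈ s ×ˢ s | a.1 - a.2 ∈ W} * #t := by simp
      _ ≤ #W * #s * #t := by gcongr; exact_mod_cast card_filter_sub_mem_le_s10 s W

lemma sq_le_two_mul_mul_card_sub {A B W : Finset G} {K m : ℝ} (hm : 0 < m)
    (hA : m ≤ #A) (hB : m ≤ #B) (hW : #W ≤ K)
    (hBW : ∀ c ∉ W, (B.addConvolution (-B) c : ℝ) ≤ K) :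
    m ^ 2 ≤ 2 * K * #(A - B) := by
  have hCS : (#A : ℝ) ^ 2 * #B ^ 2 ≤ #(A - B) * E[A, -B] := by
    have := le_card_add_mul_addEnergy A (-B)
    rw [card_neg, ← sub_eq_add_neg] at this
    exact_mod_cast this
  have hE := addEnergy_neg_le A B W ((Nat.cast_nonneg _).trans hW) hBW
  have ha : 0 < (#A : ℝ) := hm.trans_le hA
  have hb : 0 < (#B : ℝ) := hm.trans_le hB
  have hEK : (E[A, -B] : ℝ) ≤ K * #A * (#A + #B) := by
    nlinarith [mul_le_mul_of_nonneg_right hW (mul_pos ha hb).le]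
  have hsumset : (#A : ℝ) * #B ^ 2 ≤ #(A - B) * K * (#A + #B) := by
    refine le_of_mul_le_mul_left ?_ ha
    calc (#A : ℝ) * (#A * #B ^ 2) = #A ^ 2 * #B ^ 2 := by ring
      _ ≤ (#(A - B) : ℝ) * E[A, -B] := hCS
      _ ≤ (#(A - B) : ℝ) * (K * #A * (#A + #B)) := by gcongr
      _ = #A * ((#(A - B) : ℝ) * K * (#A + #B)) := by ring
  have hm2 : m ^ 2 * (#A + #B) ≤ 2 * (#A * #B ^ 2) := by
    nlinarith [mul_le_mul hA hB hm.le ha.le, mul_le_mul hB hB hm.le hb.le]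
  refine le_of_mul_le_mul_right ?_ (add_pos ha hb)
  linarith

end AddCommGroup

section Circle

variable {R : Type*} [CommRing R] [IsDomain R] [Fintype R] [DecidableEq R]

lemma card_filter_sq_add_sq_eq_le (r : R) :
    #{x : R × R | x.1 ^ 2 + x.2 ^ 2 = r} ≤ 2 * Fintype.card R := by
  rw [← card_univ]
  refine card_le_mul_card_image_of_maps_to (f := Prod.fst) (fun _ _ => mem_univ _) 2
    fun a _ => ?_
  calc _ ≤ #(Polynomial.nthRootsFinset 2 (r - a ^ 2)) := by
        refine card_le_card_of_injOn Prod.snd ?_ ?_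
        · rintro ⟨x₁, x₂⟩ hx
          simp only [mem_coe, mem_filter, mem_univ, true_and] at hx
          obtain ⟨hx, rfl⟩ := hx
          simp only [mem_coe, Polynomial.mem_nthRootsFinset two_pos]
          linear_combination hx
        · rintro ⟨x₁, x₂⟩ hx ⟨y₁, y₂⟩ hy h
          simp only [mem_coe, mem_filter, mem_univ, true_and] at hx hy
          simp_all
    _ ≤ Multiset.card (Polynomial.nthRoots 2 (r - a ^ 2)) := by
        rw [Polynomial.nthRootsFinset_def]; exact Multiset.toFinset_card_le _
    _ ≤ 2 := Polynomial.card_nthRoots 2 _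

lemma card_le_two_mul_card_image_sq_add_sq (s : Finset (R × R)) :
    #s ≤ 2 * Fintype.card R * #(s.image fun x => x.1 ^ 2 + x.2 ^ 2) :=
  card_le_mul_card_image s _ fun r _ =>
    (card_le_card (monotone_filter_left _ (subset_univ s))).trans (card_filter_sq_add_sq_eq_le r)

end Circle

end Finset

theorem stmt_10_general {F : Type*} [Field F] [Fintype F] [DecidableEq F]
    (A B : Finset (F × F)) (α : ℝ) (hα : 0 < α)
    (hA : α * (Fintype.card F : ℝ) ≤ A.card) (hB : α * (Fintype.card F : ℝ) ≤ B.card)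
    (K : ℝ) (W : Finset (F × F)) (hW : (W.card : ℝ) ≤ K)
    (hBc : ∀ c : F × F, c ∉ W → ((B ∩ B.image (fun y => y + c)).card : ℝ) ≤ K) :
    (α ^ 2 / (4 * K)) * (Fintype.card F : ℝ) ≤
      (((A ×ˢ B).image (fun p => (p.1.1 - p.2.1) ^ 2 + (p.1.2 - p.2.2) ^ 2)).card : ℝ) := by
  have hq : (0 : ℝ) < Fintype.card F := Nat.cast_pos.2 Fintype.card_pos
  have hΔ : (A ×ˢ B).image (fun p => (p.1.1 - p.2.1) ^ 2 + (p.1.2 - p.2.2) ^ 2) =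
      (A - B).image fun x => x.1 ^ 2 + x.2 ^ 2 := by
    rw [sub_def, image_image]
    rfl
  have hBW : ∀ c ∉ W, (B.addConvolution (-B) c : ℝ) ≤ K := fun c hc => by
    rw [← card_inter_vadd]
    convert hBc c hc using 5
    simp [vadd_finset_def, add_comm]
  have hsub := sq_le_two_mul_mul_card_sub (mul_pos hα hq) hA hB hW hBW
  have hcircle :
      (#(A - B) : ℝ) ≤ 2 * Fintype.card F * #((A - B).image fun x => x.1 ^ 2 + x.2 ^ 2) :=
    mod_cast card_le_two_mul_card_image_sq_add_sq (A - B)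
  have hK : 0 < K := by nlinarith [mul_pos hα hq]
  rw [hΔ, div_mul_eq_mul_div, div_le_iff₀ (by positivity)]
  refine le_of_mul_le_mul_right ?_ hq
  calc α ^ 2 * Fintype.card F * Fintype.card F = (α * Fintype.card F) ^ 2 := by ring
    _ ≤ 2 * K * #(A - B) := hsub
    _ ≤ 2 * K * (2 * Fintype.card F * #((A - B).image fun x => x.1 ^ 2 + x.2 ^ 2)) := by
        gcongr
    _ = _ := by ring

theorem stmt_10 {F : Type*} [Field F] [Fintype F] [DecidableEq F]
    (hq : Odd (Fintype.card F)) (A B : Finset (F × F)) (α : ℝ) (hα : 0 < α)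
    (hA : α * (Fintype.card F : ℝ) ≤ A.card) (hB : α * (Fintype.card F : ℝ) ≤ B.card)
    (K : ℝ) (hK : 1 ≤ K) (W : Finset (F × F)) (hW : (W.card : ℝ) ≤ K)
    (hBc : ∀ c : F × F, c ∉ W → ((B ∩ B.image (fun y => y + c)).card : ℝ) ≤ K) :
    (α ^ 2 / (4 * K)) * (Fintype.card F : ℝ) ≤
      (((A ×ˢ B).image (fun p => (p.1.1 - p.2.1) ^ 2 + (p.1.2 - p.2.2) ^ 2)).card : ℝ) :=
  stmt_10_general A B α hα hA hB K W hW hBc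
end

section
/- Let A, B ⊆ F_q^d be nonempty, and suppose |B̂(m)| ≤ C·q^β for all nonzero m ∈ F_q^d, where C > 0 and β ∈ ℝ. Then |A - B| ≥ (1/2)·min(q^d, |A||B|²/(C²·q^{2d+2β})). -/
open Finset
open scoped Pointwise

/-- The normalized finite-field Fourier transform of the indicator of `E`. -/
noncomputable def ftE {F : Type*} [Field F] [Fintype F] {d : ℕ} (χ : AddChar F ℂ)
    (E : Finset (Fin d → F)) (m : Fin d → F) : ℂ :=
  (∑ x ∈ E, χ (-(∑ i, x i * m i))) / (Fintype.card F : ℂ) ^ d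

/-!
By Cauchy–Schwarz on the representation function of `A + (-B) = A - B`,
`(|A| |B|)² ≤ |A - B| · E(A, -B)`, and by Parseval the additive energy is
`E(A, -B) = q^{3d} ∑ₘ |Â(m)|² |B̂(m)|²`. The frequency `m = 0` contributes `|A|² |B|² / q^d`;
by the decay hypothesis and Parseval for `A` the others contribute at most `C² q^{2d+2β} |A|`.
An energy bounded by a sum of two terms is at most twice the larger one, which gives the minimum.
-/

open scoped ComplexConjugate

section Parseval

variable {F ι : Type*} [Field F] [Fintype F] [Fintype ι] [DecidableEq ι] {χ : AddChar F ℂ}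

lemma sum_addChar_dotProduct_eq_zero (hχ : χ ≠ 1) {v : ι → F} (hv : v ≠ 0) :
    ∑ m : ι → F, χ (v ⬝ᵥ m) = 0 := by
  obtain ⟨a, ha⟩ := AddChar.ne_one_iff.1 hχ
  obtain ⟨i, hi⟩ := Function.ne_iff.1 hv
  let ψ : AddChar (ι → F) ℂ := χ.compAddMonoidHom (AddMonoidHom.mk' (v ⬝ᵥ ·) (dotProduct_add v))
  refine AddChar.sum_eq_zero_of_ne_one (ψ := ψ) (AddChar.ne_one_iff.2 ⟨Pi.single i (a / v i), ?_⟩)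
  simpa [ψ, dotProduct_single, mul_div_cancel₀ _ hi] using ha

lemma sum_sq_norm_sum_mul_addChar_dotProduct (hχ : χ ≠ 1) (s : Finset (ι → F))
    (f : (ι → F) → ℂ) :
    ∑ m : ι → F, ‖∑ x ∈ s, f x * χ (-(x ⬝ᵥ m))‖ ^ 2
      = (Fintype.card F : ℝ) ^ Fintype.card ι * ∑ x ∈ s, ‖f x‖ ^ 2 := by
  classical
  have orthogonality : ∀ x y : ι → F, ∑ m : ι → F, χ ((y - x) ⬝ᵥ m)
      = if x = y then (Fintype.card F : ℂ) ^ Fintype.card ι else 0 := by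
    intro x y
    split_ifs with h
    · simp [h]
    · exact sum_addChar_dotProduct_eq_zero hχ (sub_ne_zero.2 (Ne.symm h))
  have expand : ∀ m x y : ι → F, f x * χ (-(x ⬝ᵥ m)) * (conj (f y) * χ (y ⬝ᵥ m))
      = f x * conj (f y) * χ ((y - x) ⬝ᵥ m) := by
    intro m x y
    rw [sub_dotProduct, sub_eq_neg_add, AddChar.map_add_eq_mul]
    ring
  apply Complex.ofReal_injective
  push_cast
  simp_rw [← Complex.mul_conj', map_sum, map_mul, ← AddChar.map_neg_eq_conj, neg_neg, sum_mul_sum,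
    expand]
  rw [sum_comm]
  refine (sum_congr rfl fun x hx => ?_).trans (mul_sum _ _ _).symm
  rw [sum_comm]
  simp_rw [← mul_sum, orthogonality, mul_ite, mul_zero, sum_ite_eq, if_pos hx]
  ring

end Parseval

section FourierTransform

variable {F : Type*} [Field F] [Fintype F] {d : ℕ} {χ : AddChar F ℂ}

lemma ftE_eq_sum_dotProduct (χ : AddChar F ℂ) (E : Finset (Fin d → F)) (m : Fin d → F) :
    ftE χ E m = (∑ x ∈ E, χ (-(x ⬝ᵥ m))) / (Fintype.card F : ℂ) ^ d := rfl

lemma norm_ftE_zero (χ : AddChar F ℂ) (E : Finset (Fin d → F)) :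
    ‖ftE χ E 0‖ = #E / (Fintype.card F : ℝ) ^ d := by
  simp [ftE]

lemma ftE_neg [DecidableEq F] (χ : AddChar F ℂ) (E : Finset (Fin d → F)) (m : Fin d → F) :
    ftE χ (-E) m = conj (ftE χ E m) := by
  simp_rw [ftE_eq_sum_dotProduct, map_div₀, map_sum, map_pow, Complex.conj_natCast,
    sum_neg_index, neg_dotProduct, ← AddChar.map_neg_eq_conj]

lemma sum_sq_norm_ftE (hχ : χ ≠ 1) (E : Finset (Fin d → F)) :
    ∑ m, ‖ftE χ E m‖ ^ 2 = #E / (Fintype.card F : ℝ) ^ d := by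
  have parseval := sum_sq_norm_sum_mul_addChar_dotProduct hχ E 1
  simp only [Pi.one_apply, one_mul, norm_one, one_pow, sum_const, nsmul_one, Fintype.card_fin]
    at parseval
  have hq : (Fintype.card F : ℝ) ^ d ≠ 0 := by positivity
  simp_rw [ftE_eq_sum_dotProduct, norm_div, norm_pow, Complex.norm_natCast, div_pow,
    ← sum_div, parseval]
  field_simp

lemma sum_addConvolution_mul_addChar [DecidableEq F] (χ : AddChar F ℂ)
    (A B : Finset (Fin d → F)) (m : Fin d → F) :
    ∑ x, (A.addConvolution B x : ℂ) * χ (-(x ⬝ᵥ m))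
      = ((Fintype.card F : ℂ) ^ d) ^ 2 * (ftE χ A m * ftE χ B m) := by
  have hq : (Fintype.card F : ℂ) ^ d ≠ 0 := by simp
  simp_rw [ftE_eq_sum_dotProduct, div_mul_div_comm, ← sq]
  rw [mul_div_cancel₀ _ (pow_ne_zero 2 hq)]
  calc ∑ x, (A.addConvolution B x : ℂ) * χ (-(x ⬝ᵥ m))
      = ∑ ab ∈ A ×ˢ B, χ (-((ab.1 + ab.2) ⬝ᵥ m)) := by
        rw [← sum_fiberwise' (A ×ˢ B) (fun ab => ab.1 + ab.2) (fun x => χ (-(x ⬝ᵥ m)))]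
        simp only [sum_const, nsmul_eq_mul, card_add_eq]
    _ = _ := by
        simp_rw [sum_mul_sum, sum_product, add_dotProduct, neg_add, AddChar.map_add_eq_mul]

lemma addEnergy_eq_sum_sq_norm_ftE_mul [DecidableEq F] (hχ : χ ≠ 1) (A B : Finset (Fin d → F)) :
    (addEnergy A B : ℝ)
      = ((Fintype.card F : ℝ) ^ d) ^ 3 * ∑ m, ‖ftE χ A m‖ ^ 2 * ‖ftE χ B m‖ ^ 2 := by
  have parseval := sum_sq_norm_sum_mul_addChar_dotProduct hχ univ
    (fun x => (A.addConvolution B x : ℂ))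
  simp_rw [sum_addConvolution_mul_addChar, norm_mul, norm_pow, Complex.norm_natCast,
    Fintype.card_fin] at parseval
  have hq : (Fintype.card F : ℝ) ^ d ≠ 0 := by positivity
  apply mul_left_cancel₀ hq
  rw [addEnergy_eq_sum_sq]
  simp_rw [card_add_eq]
  push_cast
  rw [← parseval, mul_sum, mul_sum]
  exact sum_congr rfl fun m _ => by ring

lemma addEnergy_neg_le_s11 [DecidableEq F] (hχ : χ ≠ 1) (A : Finset (Fin d → F))
    {B : Finset (Fin d → F)} {K : ℝ} (hK : ∀ m, m ≠ 0 → ‖ftE χ B m‖ ≤ K) :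
    (addEnergy A (-B) : ℝ) ≤ (#A * #B) ^ 2 / (Fintype.card F : ℝ) ^ d
      + K ^ 2 * ((Fintype.card F : ℝ) ^ d) ^ 2 * #A := by
  set Q := (Fintype.card F : ℝ) ^ d
  have hQ : 0 < Q := by positivity
  have nonzero_frequencies :
      ∑ m ∈ univ.erase 0, ‖ftE χ A m‖ ^ 2 * ‖ftE χ B m‖ ^ 2 ≤ K ^ 2 * (#A / Q) :=
    calc ∑ m ∈ univ.erase 0, ‖ftE χ A m‖ ^ 2 * ‖ftE χ B m‖ ^ 2
        ≤ ∑ m ∈ univ.erase 0, ‖ftE χ A m‖ ^ 2 * K ^ 2 :=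
          sum_le_sum fun m hm => by gcongr; exact hK m (ne_of_mem_erase hm)
      _ ≤ ∑ m, ‖ftE χ A m‖ ^ 2 * K ^ 2 :=
          sum_le_sum_of_subset_of_nonneg (subset_univ _) fun _ _ _ => by positivity
      _ = K ^ 2 * (#A / Q) := by rw [← sum_mul, sum_sq_norm_ftE hχ, mul_comm]
  simp_rw [addEnergy_eq_sum_sq_norm_ftE_mul hχ, ftE_neg, Complex.norm_conj,
    ← add_sum_erase _ _ (mem_univ (0 : Fin d → F)), norm_ftE_zero]
  calc Q ^ 3 * ((#A / Q) ^ 2 * (#B / Q) ^ 2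
        + ∑ m ∈ univ.erase 0, ‖ftE χ A m‖ ^ 2 * ‖ftE χ B m‖ ^ 2)
      ≤ Q ^ 3 * ((#A / Q) ^ 2 * (#B / Q) ^ 2 + K ^ 2 * (#A / Q)) := by gcongr
    _ = _ := by field_simp

end FourierTransform

lemma half_min_le_of_sq_le_mul {x D E N M : ℝ} (hx : 0 < x) (hN : 0 < N) (hM : 0 < M)
    (hD : 0 ≤ D) (hxDE : x ≤ D * E) (hE : E ≤ x / N + x / M) : 1 / 2 * min N M ≤ D := by
  have hmin : 0 < min N M := lt_min hN hM
  have hE' : E ≤ 2 * x / min N M := by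
    have hN' : x / N ≤ x / min N M := div_le_div_of_nonneg_left hx.le hmin (min_le_left _ _)
    have hM' : x / M ≤ x / min N M := div_le_div_of_nonneg_left hx.le hmin (min_le_right _ _)
    linarith [show 2 * x / min N M = x / min N M + x / min N M by ring]
  have key : x * min N M ≤ D * (2 * x) := by
    have := hxDE.trans (mul_le_mul_of_nonneg_left hE' hD)
    rwa [mul_div_assoc', le_div_iff₀ hmin] at this
  nlinarith

theorem stmt_11_general {F : Type*} [Field F] [Fintype F] [DecidableEq F] {d : ℕ}
    (χ : AddChar F ℂ) (hχ : χ ≠ 1) (A B : Finset (Fin d → F))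
    (hA : A.Nonempty) (hB : B.Nonempty) (C : ℝ) (hC : 0 < C) (β : ℝ)
    (hdecay : ∀ m : Fin d → F, m ≠ 0 → ‖ftE χ B m‖ ≤ C * (Fintype.card F : ℝ) ^ β) :
    (1 / 2 : ℝ) * min ((Fintype.card F : ℝ) ^ (d : ℝ))
        ((A.card : ℝ) * (B.card : ℝ) ^ 2 / (C ^ 2 * (Fintype.card F : ℝ) ^ (2 * (d : ℝ) + 2 * β)))
      ≤ ((A - B).card : ℝ) := by
  have hq : (0 : ℝ) < Fintype.card F := by exact_mod_cast Fintype.card_pos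
  have hAcard : (0 : ℝ) < #A := by exact_mod_cast hA.card_pos
  have hBcard : (0 : ℝ) < #B := by exact_mod_cast hB.card_pos
  have cauchy_schwarz : ((#A : ℝ) * #B) ^ 2 ≤ #(A - B) * addEnergy A (-B) := by
    have := le_card_add_mul_addEnergy A (-B)
    rw [card_neg, ← sub_eq_add_neg] at this
    exact_mod_cast (mul_pow (#A) (#B) 2).symm ▸ this
  have hpow : (Fintype.card F : ℝ) ^ (2 * (d : ℝ) + 2 * β)
      = ((Fintype.card F : ℝ) ^ d) ^ 2 * ((Fintype.card F : ℝ) ^ β) ^ 2 := by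
    rw [two_mul, two_mul, Real.rpow_add hq, Real.rpow_add hq, Real.rpow_add hq, Real.rpow_natCast]
    ring
  refine half_min_le_of_sq_le_mul (by positivity) (by positivity) (by positivity) (by positivity)
    cauchy_schwarz ((addEnergy_neg_le_s11 hχ A hdecay).trans_eq ?_)
  rw [Real.rpow_natCast, hpow]
  field_simp

theorem stmt_11 {F : Type*} [Field F] [Fintype F] [DecidableEq F] {d : ℕ} (hd : 1 ≤ d)
    (χ : AddChar F ℂ) (hχ : χ ≠ 1) (A B : Finset (Fin d → F))
    (hA : A.Nonempty) (hB : B.Nonempty) (C : ℝ) (hC : 0 < C) (β : ℝ)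
    (hdecay : ∀ m : Fin d → F, m ≠ 0 → ‖ftE χ B m‖ ≤ C * (Fintype.card F : ℝ) ^ β) :
    (1 / 2 : ℝ) * min ((Fintype.card F : ℝ) ^ (d : ℝ))
        ((A.card : ℝ) * (B.card : ℝ) ^ 2 / (C ^ 2 * (Fintype.card F : ℝ) ^ (2 * (d : ℝ) + 2 * β)))
      ≤ ((A - B).card : ℝ) :=
  stmt_11_general χ hχ A B hA hB C hC β hdecay
end

section
/- Let B ⊆ F_q^d be a Salem set with constant C, i.e., |B̂(m)| ≤ C·√|B|/q^d for all nonzero m ∈ F_q^d. Then for any nonempty A ⊆ F_q^d with |A||B| ≥ q^d, we have |A - B| ≥ (1/(2C²))·q^d (assuming C ≥ 1). -/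
open Finset
open scoped Pointwise

section
variable {F ι : Type*} [Field F] [Fintype ι] (χ : AddChar F ℂ)

noncomputable def charSum (s : Finset (ι → F)) (m : ι → F) : ℂ := ∑ x ∈ s, χ (x ⬝ᵥ m)

lemma charSum_zero (s : Finset (ι → F)) : charSum χ s 0 = #s := by
  simp [charSum]

def IsSalemSet (t : Finset (ι → F)) (C : ℝ) : Prop :=
  ∀ m ≠ 0, ‖charSum χ t m‖ ≤ C * √(#t : ℝ)

lemma IsSalemSet.norm_charSum_sq_le {χ} {t : Finset (ι → F)} {C : ℝ} (ht : IsSalemSet χ t C)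
    {m : ι → F} (hm : m ≠ 0) : ‖charSum χ t m‖ ^ 2 ≤ C ^ 2 * #t := by
  calc ‖charSum χ t m‖ ^ 2 ≤ (C * √(#t : ℝ)) ^ 2 := pow_le_pow_left₀ (norm_nonneg _) (ht m hm) 2
    _ = C ^ 2 * #t := by rw [mul_pow, Real.sq_sqrt (Nat.cast_nonneg _)]

variable [Fintype F]

lemma norm_charSum_sq (s : Finset (ι → F)) (m : ι → F) :
    (‖charSum χ s m‖ ^ 2 : ℂ) = ∑ x ∈ s ×ˢ s, χ ((x.1 - x.2) ⬝ᵥ m) := by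
  rw [← Complex.mul_conj', charSum, map_sum, sum_mul_sum, sum_product]
  refine sum_congr rfl fun x _ => sum_congr rfl fun y _ => ?_
  rw [← AddChar.map_neg_eq_conj χ, ← AddChar.map_add_eq_mul, sub_dotProduct, sub_eq_add_neg]

variable [DecidableEq F] [DecidableEq ι]

lemma sum_addChar_dotProduct (hχ : χ ≠ 1) (v : ι → F) :
    ∑ m : ι → F, χ (v ⬝ᵥ m) = if v = 0 then (Fintype.card F : ℂ) ^ Fintype.card ι else 0 := by
  split_ifs with hv
  · simp [hv]
  obtain ⟨i, hi⟩ : ∃ i, v i ≠ 0 := Function.ne_iff.mp hv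
  obtain ⟨a, ha⟩ := AddChar.ne_one_iff.mp hχ
  let ψ : AddChar (ι → F) ℂ := χ.compAddMonoidHom (AddMonoidHom.mk' (v ⬝ᵥ ·) (dotProduct_add v))
  have hψ : ψ (Pi.single i (a / v i)) ≠ 1 := by
    simpa [ψ, dotProduct_single, mul_div_cancel₀ _ hi] using ha
  exact AddChar.sum_eq_zero_of_ne_one (AddChar.ne_one_iff.mpr ⟨_, hψ⟩)

lemma sum_sum_addChar_dotProduct (hχ : χ ≠ 1) {κ : Type*} (u : Finset κ) (g : κ → ι → F) :
    ∑ m : ι → F, ∑ k ∈ u, χ (g k ⬝ᵥ m)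
      = (Fintype.card F : ℂ) ^ Fintype.card ι * #{k ∈ u | g k = 0} := by
  rw [sum_comm]
  simp_rw [sum_addChar_dotProduct χ hχ]
  rw [sum_ite, sum_const_zero, add_zero, sum_const, nsmul_eq_mul, mul_comm]

lemma sum_norm_charSum_sq (hχ : χ ≠ 1) (s : Finset (ι → F)) :
    ∑ m, ‖charSum χ s m‖ ^ 2 = (Fintype.card F : ℝ) ^ Fintype.card ι * #s := by
  apply Complex.ofReal_injective
  push_cast
  simp_rw [norm_charSum_sq, sum_sum_addChar_dotProduct χ hχ, sub_eq_zero]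
  rw [← diag_card s, diag_eq_filter]

lemma card_pow_mul_addEnergy (hχ : χ ≠ 1) (s t : Finset (ι → F)) :
    (Fintype.card F : ℝ) ^ Fintype.card ι * s.addEnergy t
      = ∑ m, ‖charSum χ s m‖ ^ 2 * ‖charSum χ t m‖ ^ 2 := by
  have hprod : ∀ m, (∑ x ∈ s ×ˢ s, χ ((x.1 - x.2) ⬝ᵥ m)) * ∑ y ∈ t ×ˢ t, χ ((y.1 - y.2) ⬝ᵥ m)
      = ∑ z ∈ (s ×ˢ s) ×ˢ t ×ˢ t, χ ((z.1.1 + z.2.1 - (z.1.2 + z.2.2)) ⬝ᵥ m) := fun m => by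
    rw [sum_mul_sum, ← sum_product']
    refine sum_congr rfl fun z _ => ?_
    rw [← AddChar.map_add_eq_mul, ← add_dotProduct]
    congr 2
    abel
  apply Complex.ofReal_injective
  push_cast
  simp_rw [norm_charSum_sq, hprod, sum_sum_addChar_dotProduct χ hχ, sub_eq_zero, addEnergy]

variable {χ}

lemma IsSalemSet.sum_norm_charSum_sq_mul_le (hχ : χ ≠ 1) {t : Finset (ι → F)} {C : ℝ}
    (ht : IsSalemSet χ t C) (s : Finset (ι → F)) :
    ∑ m, ‖charSum χ s m‖ ^ 2 * ‖charSum χ t m‖ ^ 2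
      ≤ ((#s : ℝ) * #t) ^ 2 + C ^ 2 * #t * ((Fintype.card F : ℝ) ^ Fintype.card ι * #s) := by
  rw [← add_sum_erase _ _ (mem_univ 0), charSum_zero, charSum_zero, Complex.norm_natCast,
    Complex.norm_natCast, ← mul_pow]
  gcongr
  calc ∑ m ∈ univ.erase 0, ‖charSum χ s m‖ ^ 2 * ‖charSum χ t m‖ ^ 2
      ≤ ∑ m ∈ univ.erase 0, ‖charSum χ s m‖ ^ 2 * (C ^ 2 * #t) :=
        sum_le_sum fun m hm => by gcongr; exact ht.norm_charSum_sq_le (ne_of_mem_erase hm)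
    _ ≤ ∑ m, ‖charSum χ s m‖ ^ 2 * (C ^ 2 * #t) :=
        sum_le_sum_of_subset_of_nonneg (erase_subset _ _) fun _ _ _ => by positivity
    _ = C ^ 2 * #t * ((Fintype.card F : ℝ) ^ Fintype.card ι * #s) := by
        rw [← sum_mul, sum_norm_charSum_sq χ hχ]; ring

theorem IsSalemSet.card_pow_le_mul_card_add (hχ : χ ≠ 1) {t : Finset (ι → F)} {C : ℝ}
    (ht : IsSalemSet χ t C) {s : Finset (ι → F)}
    (hst : (Fintype.card F : ℝ) ^ Fintype.card ι ≤ #s * #t) :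
    (Fintype.card F : ℝ) ^ Fintype.card ι ≤ (1 + C ^ 2) * #(s + t) := by
  set Q := (Fintype.card F : ℝ) ^ Fintype.card ι
  set N := (#s : ℝ) * #t
  have hN : 0 < N := (by positivity : 0 < Q).trans_le hst
  have hCS : N ^ 2 ≤ #(s + t) * s.addEnergy t := by
    rw [mul_pow]; exact_mod_cast le_card_add_mul_addEnergy s t
  have hE : Q * s.addEnergy t ≤ (1 + C ^ 2) * N ^ 2 := calc
    Q * s.addEnergy t ≤ N ^ 2 + C ^ 2 * #t * (Q * #s) :=
      (card_pow_mul_addEnergy χ hχ s t).trans_le (ht.sum_norm_charSum_sq_mul_le hχ s)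
    _ = N ^ 2 + C ^ 2 * N * Q := by ring
    _ ≤ N ^ 2 + C ^ 2 * N * N := by gcongr
    _ = (1 + C ^ 2) * N ^ 2 := by ring
  refine le_of_mul_le_mul_right ?_ (pow_pos hN 2)
  calc Q * N ^ 2 ≤ Q * (#(s + t) * s.addEnergy t) := by gcongr
    _ = #(s + t) * (Q * s.addEnergy t) := by ring
    _ ≤ #(s + t) * ((1 + C ^ 2) * N ^ 2) := by gcongr
    _ = (1 + C ^ 2) * #(s + t) * N ^ 2 := by ring

end

lemma ftE_eq_charSum_neg {F : Type*} [Field F] [Fintype F] [DecidableEq F] {d : ℕ}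
    (χ : AddChar F ℂ) (B : Finset (Fin d → F)) (m : Fin d → F) :
    ftE χ B m = charSum χ (-B) m / (Fintype.card F : ℂ) ^ d := by
  simp [ftE, charSum, dotProduct]

theorem stmt_13_general {F : Type*} [Field F] [Fintype F] [DecidableEq F] {d : ℕ}
    (χ : AddChar F ℂ) (hχ : χ ≠ 1) (A B : Finset (Fin d → F))
    (C : ℝ) (hC : 1 ≤ C)
    (hSalem : ∀ m : Fin d → F, m ≠ 0 →
      ‖ftE χ B m‖ ≤ C * Real.sqrt B.card / (Fintype.card F : ℝ) ^ d)
    (hAB : ((Fintype.card F : ℝ)) ^ d ≤ (A.card : ℝ) * B.card) :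
    (1 / (2 * C ^ 2)) * (Fintype.card F : ℝ) ^ d ≤ ((A - B).card : ℝ) := by
  have hq : (0 : ℝ) < (Fintype.card F : ℝ) ^ d := by positivity
  have hSalemNeg : IsSalemSet χ (-B) C := fun m hm => by
    simpa [ftE_eq_charSum_neg, card_neg, div_le_div_iff_of_pos_right hq] using hSalem m hm
  have hsum := hSalemNeg.card_pow_le_mul_card_add hχ (s := A) (by simpa using hAB)
  rw [Fintype.card_fin, ← sub_eq_add_neg] at hsum
  have hC2 : 1 + C ^ 2 ≤ 2 * C ^ 2 := by nlinarith
  rw [one_div_mul_eq_div, div_le_iff₀ (by positivity), mul_comm]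
  exact hsum.trans (by gcongr)

theorem stmt_13 {F : Type*} [Field F] [Fintype F] [DecidableEq F] {d : ℕ} (hd : 1 ≤ d)
    (χ : AddChar F ℂ) (hχ : χ ≠ 1) (A B : Finset (Fin d → F)) (hA : A.Nonempty)
    (C : ℝ) (hC : 1 ≤ C)
    (hSalem : ∀ m : Fin d → F, m ≠ 0 →
      ‖ftE χ B m‖ ≤ C * Real.sqrt B.card / (Fintype.card F : ℝ) ^ d)
    (hAB : ((Fintype.card F : ℝ)) ^ d ≤ (A.card : ℝ) * B.card) :
    (1 / (2 * C ^ 2)) * (Fintype.card F : ℝ) ^ d ≤ ((A - B).card : ℝ) :=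
  stmt_13_general χ hχ A B C hC hSalem hAB
end
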